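/- (Lemma 1, part (b).) If w⁽²⁾ ≥ w⁽¹⁾ (componentwise, covering both renewable infeed and load) and all other variables are equal, then ρ̃(u, δ, x, w⁽²⁾) ≤ ρ̃(u, δ, x, w⁽¹⁾). -/
import Mathlib


noncomputable def sat (a x b : ℝ) : ℝ := max a (min x b)

/-- Augmented total power of the microgrid, as a function of the disturbance
`w = (w_r, w_d)` (renewable infeed and load). -/
noncomputable def ptot (T S R D : ℕ)
    (ρmin ρmax Ts : ℝ)
    (uT χT ptmin ptmax : Fin T → ℝ) (δ : Fin T → Bool)
    (uS χS psmin psmax xmin xmax : Fin S → ℝ)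
    (uR χR prmin : Fin R → ℝ) (x : Fin S → ℝ)
    (wr : Fin R → ℝ) (wd : Fin D → ℝ) (ρ : ℝ) : ℝ :=
  min 0 (ρ - ρmin) + max 0 (ρ - ρmax)
    + (∑ i, if δ i then sat (ptmin i) (uT i + χT i * ρ) (ptmax i) else 0)
    + (∑ i, sat (max (psmin i) ((x i - xmax i) / Ts)) (uS i + χS i * ρ)
          (min (psmax i) ((x i - xmin i) / Ts)))
    + (∑ i, sat (prmin i) (uR i + χR i * ρ) (wr i))
    + (∑ i, wd i)

lemma sat_mono_mid {a b x y : ℝ} (h : x ≤ y) : sat a x b ≤ sat a y b :=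
  max_le_max le_rfl (min_le_min h le_rfl)

lemma sat_mono_right {a b c x : ℝ} (h : b ≤ c) : sat a x b ≤ sat a x c :=
  max_le_max le_rfl (min_le_min le_rfl h)

/-- Lemma 1(b): with non-negative inverse droop gains, if the disturbance satisfies
`w⁽²⁾ ≥ w⁽¹⁾` componentwise (both renewable infeed and load) and all other variables
coincide, then the largest zero of the augmented power balance satisfies
`ρ̃⁽²⁾ ≤ ρ̃⁽¹⁾`. -/
theorem rho_tilde_antitone_in_disturbance
    (T S R D : ℕ) (ρmin ρmax Ts : ℝ)
    (uT χT ptmin ptmax : Fin T → ℝ) (δ : Fin T → Bool)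
    (uS χS psmin psmax xmin xmax : Fin S → ℝ)
    (uR χR prmin : Fin R → ℝ) (x : Fin S → ℝ)
    (hρ : ρmin ≤ ρmax) (hTs : 0 < Ts)
    (hχT : ∀ i, 0 ≤ χT i) (hχS : ∀ i, 0 ≤ χS i) (hχR : ∀ i, 0 ≤ χR i)
    (wr₁ wr₂ : Fin R → ℝ) (wd₁ wd₂ : Fin D → ℝ)
    (hwr : wr₁ ≤ wr₂) (hwd : wd₁ ≤ wd₂)
    (ρstar₁ ρstar₂ : ℝ)
    (h₁ : IsGreatest {ρ : ℝ |
      ptot T S R D ρmin ρmax Ts uT χT ptmin ptmax δ uS χS psmin psmax xmin xmax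
        uR χR prmin x wr₁ wd₁ ρ = 0} ρstar₁)
    (h₂ : IsGreatest {ρ : ℝ |
      ptot T S R D ρmin ρmax Ts uT χT ptmin ptmax δ uS χS psmin psmax xmin xmax
        uR χR prmin x wr₂ wd₂ ρ = 0} ρstar₂) :
    ρstar₂ ≤ ρstar₁ := by
  by_cases hle : ρstar₂ ≤ ρstar₁
  · exact hle
  push_neg at hle
  have hmono1 : ptot T S R D ρmin ρmax Ts uT χT ptmin ptmax δ uS χS psmin psmax xmin xmax
      uR χR prmin x wr₁ wd₁ ρstar₁ ≤
      ptot T S R D ρmin ρmax Ts uT χT ptmin ptmax δ uS χS psmin psmax xmin xmax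
      uR χR prmin x wr₁ wd₁ ρstar₂ := by
    unfold ptot
    have h12 : ρstar₁ ≤ ρstar₂ := hle.le
    gcongr ?_ + ?_ + ?_ + ?_ + ?_ + ?_
    · exact min_le_min le_rfl (by linarith)
    · exact max_le_max le_rfl (by linarith)
    · refine Finset.sum_le_sum fun i _ => ?_
      by_cases hδ : δ i <;> simp [hδ]
      exact sat_mono_mid (by nlinarith [hχT i])
    · exact Finset.sum_le_sum fun i _ => sat_mono_mid (by nlinarith [hχS i])
    · exact Finset.sum_le_sum fun i _ => sat_mono_mid (by nlinarith [hχR i])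
    · exact le_rfl
  have hmono2 : ptot T S R D ρmin ρmax Ts uT χT ptmin ptmax δ uS χS psmin psmax xmin xmax
      uR χR prmin x wr₁ wd₁ ρstar₂ ≤
      ptot T S R D ρmin ρmax Ts uT χT ptmin ptmax δ uS χS psmin psmax xmin xmax
      uR χR prmin x wr₂ wd₂ ρstar₂ := by
    unfold ptot
    gcongr ?_ + ?_ + ?_ + ?_ + ?_ + ?_
    · exact le_rfl
    · exact le_rfl
    · exact le_rfl
    · exact le_rfl
    · exact Finset.sum_le_sum fun i _ => sat_mono_right (hwr i)
    · exact Finset.sum_le_sum fun i _ => hwd i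
  have hz : ptot T S R D ρmin ρmax Ts uT χT ptmin ptmax δ uS χS psmin psmax xmin xmax
      uR χR prmin x wr₁ wd₁ ρstar₂ = 0 :=
    le_antisymm (hmono2.trans_eq h₂.1) (le_of_eq_of_le h₁.1.symm hmono1)
  exact absurd (h₁.2 hz) (not_le.mpr hle)
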